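/- Let G be a connected graph for which every minimum vertex cover induces a connected subgraph. If every vertex of G lies in some minimum vertex cover, then evc(G) = mvc(G); otherwise evc(G) = mvc(G) + 1. -/

import Mathlib

namespace EVC

open SimpleGraph

variable {V : Type*}

/-- `S` is a vertex cover of `G`. -/
def IsVC (G : SimpleGraph V) (S : Set V) : Prop :=
  ∀ ⦃u v : V⦄, G.Adj u v → u ∈ S ∨ v ∈ S

/-- The minimum vertex cover number of `G`. -/
noncomputable def mvc (G : SimpleGraph V) : ℕ :=
  sInf {k | ∃ S : Set V, IsVC G S ∧ S.ncard = k}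

/-- The minimum size of a vertex cover of `G` containing all vertices of `U`. -/
noncomputable def mvcOn (G : SimpleGraph V) (U : Set V) : ℕ :=
  sInf {k | ∃ S : Set V, IsVC G S ∧ U ⊆ S ∧ S.ncard = k}

/-- Configuration `S'` is obtained from configuration `S` by a legal move of the guards
defending an attack on the edge `uv`: each guard stays or moves to an adjacent vertex
(at most one guard per vertex), and some guard moves across the attacked edge `uv`. -/
def Defends (G : SimpleGraph V) (S S' : Set V) (u v : V) : Prop :=
  ∃ f : V → V, Set.BijOn f S S' ∧ (∀ w ∈ S, f w = w ∨ G.Adj w (f w)) ∧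
    ((u ∈ S ∧ f u = v) ∨ (v ∈ S ∧ f v = u))

/-- `C` is an eternal vertex cover class of `G` with `k` guards, each configuration being a
vertex cover of size `k` containing `U`: from each configuration, every attack on an edge
can be defended by a legal move to another configuration in `C`. -/
def IsEvcClassOn (G : SimpleGraph V) (U : Set V) (k : ℕ) (C : Set (Set V)) : Prop :=
  C.Nonempty ∧ (∀ S ∈ C, IsVC G S ∧ U ⊆ S ∧ S.ncard = k) ∧
    ∀ S ∈ C, ∀ u v : V, G.Adj u v → ∃ S' ∈ C, Defends G S S' u v

/-- An eternal vertex cover class with no constraint on occupied vertices. -/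
def IsEvcClass (G : SimpleGraph V) (k : ℕ) (C : Set (Set V)) : Prop :=
  IsEvcClassOn G ∅ k C

/-- `evc_U(G)` : the minimum `k` admitting an eternal vertex cover class all of whose
configurations contain `U`. -/
noncomputable def evcOn (G : SimpleGraph V) (U : Set V) : ℕ :=
  sInf {k | ∃ C : Set (Set V), IsEvcClassOn G U k C}

/-- The eternal vertex cover number of `G`. -/
noncomputable def evc (G : SimpleGraph V) : ℕ := evcOn G ∅

/-- `x` is a cut vertex of the connected graph `G`. -/
def IsCutVertex (G : SimpleGraph V) (x : V) : Prop :=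
  G.Connected ∧ ¬ (G.induce {v : V | v ≠ x}).Connected

/-- The set of cut vertices of `G`. -/
def cutVertices (G : SimpleGraph V) : Set V := {x | IsCutVertex G x}

/-- `G` is locally connected: every open neighborhood induces a connected subgraph. -/
def LocallyConnected (G : SimpleGraph V) : Prop :=
  ∀ v : V, (G.induce (G.neighborSet v)).Connected

end EVC

/-!
If every vertex lies in a minimum vertex cover, the minimum vertex covers themselves form an
eternal class. Against an attack on `uv` with `u ∉ S`, choose a minimum cover `T ∋ u` meeting `S`
as much as possible, and move the guards of `S \ {v}` into `T \ {u}` by Hall's theorem. A set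
`A ⊆ S \ {v}` violating Hall's condition could be exchanged for its closed neighbourhood in `T`,
giving another minimum cover through `u`; maximality of `|S ∩ T|` then forces `A` to be closed
under adjacency inside `S`, which is impossible since the cover `S` is connected and `v ∉ A`.

If some vertex `w` lies in no minimum cover, `mvc G` guards always sit on a minimum cover, so no
guard can cross an edge at `w`. Conversely, any connected vertex cover plus one extra vertex is an
eternal configuration: the extra guard and the cover shift towards the attacked edge, again by Hall.
-/

open EVC SimpleGraph Set Finset

theorem Set.exists_injOn_of_forall_ncard_le {α β : Type*} [Nonempty β] {r : α → β → Prop}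
    {s : Set α} {t : Set β} (hs : s.Finite) (ht : t.Finite)
    (h : ∀ a ⊆ s, a.ncard ≤ {y ∈ t | ∃ x ∈ a, r x y}.ncard) :
    ∃ f : α → β, InjOn f s ∧ MapsTo f s t ∧ ∀ x ∈ s, r x (f x) := by
  classical
  have := hs.fintype
  have := ht.fintype
  have hall (A : Finset s) : #A ≤ #{y : t | ∃ x ∈ A, r x y} := by
    have hA : {y ∈ t | ∃ x ∈ Subtype.val '' (A : Set s), r x y} =
        Subtype.val '' (({y : t | ∃ x ∈ A, r x y} : Finset t) : Set t) := by
      ext y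
      simp only [mem_image, SetLike.mem_coe, Subtype.exists, exists_and_right, exists_eq_right,
        mem_ofPred_eq, coe_filter, Finset.mem_univ, true_and, exists_prop]
    simpa only [hA, ncard_image_of_injective _ Subtype.val_injective, ncard_coe_finset] using
      h (Subtype.val '' (A : Set s)) (by simp)
  obtain ⟨g, hg, hgr⟩ :=
    (Fintype.all_card_le_filter_rel_iff_exists_injective (fun (x : s) (y : t) => r x y)).1 hall
  refine ⟨fun x => if hx : x ∈ s then g ⟨x, hx⟩ else Classical.arbitrary β, ?_, ?_, ?_⟩
  · intro x hx y hy hxy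
    exact congrArg Subtype.val (hg (Subtype.val_injective (by simpa [hx, hy] using hxy)))
  · intro x hx
    simp [hx]
  · intro x hx
    simpa [hx] using hgr ⟨x, hx⟩

namespace EVC

variable {V : Type*} {G : SimpleGraph V} {S T A : Set V} {u v x : V} {k : ℕ} {C : Set (Set V)}

def closedNbhd (G : SimpleGraph V) (A : Set V) : Set V := {y | ∃ x ∈ A, x = y ∨ G.Adj x y}

lemma subset_closedNbhd : A ⊆ closedNbhd G A := fun x hx => ⟨x, hx, Or.inl rfl⟩

lemma mem_closedNbhd_of_adj {x y : V} (hx : x ∈ A) (hxy : G.Adj x y) : y ∈ closedNbhd G A :=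
  ⟨x, hx, Or.inr hxy⟩

def IsMinVC (G : SimpleGraph V) (S : Set V) : Prop := IsVC G S ∧ S.ncard = mvc G

lemma IsVC.mono (hS : IsVC G S) (hST : S ⊆ T) : IsVC G T := fun _ _ h =>
  (hS h).imp (@hST _) (@hST _)

lemma mvc_le_ncard (hS : IsVC G S) : mvc G ≤ S.ncard := Nat.sInf_le ⟨S, hS, rfl⟩

lemma exists_isMinVC (G : SimpleGraph V) : ∃ S, IsMinVC G S :=
  Nat.sInf_mem (s := {k | ∃ S : Set V, IsVC G S ∧ S.ncard = k})
    ⟨_, univ, fun _ _ _ => Or.inl trivial, rfl⟩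

lemma IsVC.sdiff_union_inter_closedNbhd (hS : IsVC G S) (hT : IsVC G T) (A : Set V) :
    IsVC G (S \ A ∪ T ∩ closedNbhd G A) := by
  have key : ∀ ⦃x y⦄, G.Adj x y → x ∈ S → x ∈ S \ A ∪ T ∩ closedNbhd G A ∨
      y ∈ S \ A ∪ T ∩ closedNbhd G A := by
    intro x y hxy hxS
    by_cases hxA : x ∈ A
    · rcases hT hxy with hxT | hyT
      · exact Or.inl (Or.inr ⟨hxT, subset_closedNbhd hxA⟩)
      · exact Or.inr (Or.inr ⟨hyT, mem_closedNbhd_of_adj hxA hxy⟩)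
    · exact Or.inl (Or.inl ⟨hxS, hxA⟩)
  intro x y hxy
  rcases hS hxy with hxS | hyS
  · exact key hxy hxS
  · exact (key hxy.symm hyS).symm

lemma exists_adj_mem_of_connected (hG : G.Connected) (hS : IsVC G S) (hv : v ∈ S) (hu : u ∉ S) :
    ∃ y ∈ S, G.Adj u y := by
  obtain ⟨p⟩ := hG.preconnected u v
  cases p with
  | nil => exact absurd hv hu
  | cons h _ => exact ⟨_, (hS h).resolve_left hu, h⟩

lemma mem_of_forall_adj_mem (hS : (G.induce S).Connected) {a b : V} (ha : a ∈ S ∩ A)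
    (hb : b ∈ S) (hA : ∀ x ∈ S ∩ A, ∀ y ∈ S, G.Adj x y → y ∈ A) : b ∈ A := by
  by_contra hbA
  obtain ⟨p⟩ := hS.preconnected ⟨a, ha.1⟩ ⟨b, hb⟩
  obtain ⟨d, -, hd, hd'⟩ := p.exists_boundary_dart {x : S | (x : V) ∈ A} ha.2 hbA
  exact hd' (hA _ ⟨d.fst.2, hd⟩ _ d.snd.2 d.adj)

lemma Defends.symm {S' : Set V} (h : Defends G S S' u v) : Defends G S S' v u := by
  obtain ⟨f, hf, hmove, hcross⟩ := h
  exact ⟨f, hf, hmove, hcross.symm⟩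

lemma Defends.mem_or_mem {S' : Set V} (h : Defends G S S' u v) : u ∈ S ∨ u ∈ S' := by
  obtain ⟨f, hf, -, ⟨hu, -⟩ | ⟨hv, rfl⟩⟩ := h
  · exact Or.inl hu
  · exact Or.inr (hf.mapsTo hv)

lemma evc_le_of_isEvcClass (h : IsEvcClass G k C) : evc G ≤ k := Nat.sInf_le ⟨C, h⟩

lemma mvc_le_of_isEvcClass (h : IsEvcClass G k C) : mvc G ≤ k := by
  obtain ⟨⟨S, hS⟩, hC, -⟩ := h
  exact (hC S hS).2.2 ▸ mvc_le_ncard (hC S hS).1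

lemma mvc_lt_of_isEvcClass {w y : V} (hw : ∀ S, IsMinVC G S → w ∉ S) (hwy : G.Adj w y)
    (h : IsEvcClass G k C) : mvc G < k := by
  refine (mvc_le_of_isEvcClass h).lt_of_ne fun hk => ?_
  obtain ⟨⟨S, hS⟩, hC, hdef⟩ := h
  have hmin : ∀ S ∈ C, IsMinVC G S := fun S hS => ⟨(hC S hS).1, hk ▸ (hC S hS).2.2⟩
  obtain ⟨S', hS', hd⟩ := hdef S hS w y hwy
  exact hd.mem_or_mem.elim (hw S (hmin S hS)) (hw S' (hmin S' hS'))

variable [Finite V]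

lemma defends_of_injOn {f : V → V} (hmaps : MapsTo f S T) (hinj : InjOn f S)
    (hcard : T.ncard ≤ S.ncard) (hmove : ∀ w ∈ S, f w = w ∨ G.Adj w (f w)) (hv : v ∈ S)
    (hfv : f v = u) : Defends G S T u v := by
  have himage : f '' S = T :=
    eq_of_subset_of_ncard_le hmaps.image_subset (hinj.ncard_image.symm ▸ hcard)
  exact ⟨f, ⟨hmaps, hinj, himage.ge⟩, hmove, Or.inr ⟨hv, hfv⟩⟩

lemma defends_self (hu : u ∈ S) (hv : v ∈ S) (huv : G.Adj u v) : Defends G S S u v := by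
  classical
  refine defends_of_injOn (f := Equiv.swap v u) ?_ (Equiv.injective _).injOn le_rfl ?_ hv
    (Equiv.swap_apply_left v u)
  · intro w hw
    rw [Equiv.swap_apply_def]
    split_ifs <;> assumption
  · intro w _
    rw [Equiv.swap_apply_def]
    split_ifs with hwv hwu
    · exact Or.inr (hwv ▸ huv.symm)
    · exact Or.inr (hwu ▸ huv)
    · exact Or.inl rfl

lemma defends_of_hall (hcard : T.ncard ≤ S.ncard) (hv : v ∈ S) (hu : u ∈ T) (huv : G.Adj u v)
    (hall : ∀ A ⊆ S \ {v}, A.ncard ≤ ((T \ {u}) ∩ closedNbhd G A).ncard) :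
    Defends G S T u v := by
  classical
  have : Nonempty V := ⟨v⟩
  obtain ⟨f, hinj, hmaps, hmove⟩ :=
    exists_injOn_of_forall_ncard_le (r := fun x y => x = y ∨ G.Adj x y) (toFinite _) (toFinite _)
      hall
  have hfeq : EqOn (Function.update f v u) f (S \ {v}) := fun w hw =>
    Function.update_of_ne hw.2 _ _
  have hmaps' : MapsTo (Function.update f v u) (S \ {v}) (T \ {u}) := hfeq.mapsTo_iff.2 hmaps
  rw [← insert_sdiff_self_of_mem hv] at hcard ⊢
  refine defends_of_injOn ?_ ?_ hcard ?_ (mem_insert v _) (Function.update_self v u f)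
  · have := (hmaps'.mono_right sdiff_subset).insert v
    rwa [Function.update_self, insert_eq_of_mem hu] at this
  · refine (injOn_insert (fun h => h.2 rfl)).2 ⟨hfeq.symm.injOn_iff.1 hinj, ?_⟩
    rintro ⟨w, hw, hwu⟩
    exact (hmaps' hw).2 (hwu.trans (Function.update_self v u f))
  · rintro w (rfl | hw)
    · exact Or.inr (by simpa using huv.symm)
    · exact (hfeq hw).symm ▸ (hmove w hw).imp_left Eq.symm

lemma isEvcClass_of_forall_defends (hne : C.Nonempty)
    (hC : ∀ S ∈ C, IsVC G S ∧ S.ncard = k)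
    (hdef : ∀ S ∈ C, ∀ u v, G.Adj u v → u ∉ S → ∃ S' ∈ C, Defends G S S' u v) :
    IsEvcClass G k C := by
  refine ⟨hne, fun S hS => ⟨(hC S hS).1, empty_subset S, (hC S hS).2⟩, fun S hS u v huv => ?_⟩
  by_cases hu : u ∈ S
  · by_cases hv : v ∈ S
    · exact ⟨S, hS, defends_self hu hv huv⟩
    · obtain ⟨S', hS', h⟩ := hdef S hS v u huv.symm hv
      exact ⟨S', hS', h.symm⟩
  · exact hdef S hS u v huv hu

lemma isEvcClass_univ (G : SimpleGraph V) :
    IsEvcClass G (Nat.card V) {univ} :=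
  isEvcClass_of_forall_defends (singleton_nonempty _)
    (by simp [IsVC, ncard_univ]) (by simp)

lemma exists_isEvcClass_evc (G : SimpleGraph V) : ∃ C, IsEvcClass G (evc G) C :=
  Nat.sInf_mem (s := {k | ∃ C, IsEvcClassOn G ∅ k C}) ⟨_, _, isEvcClass_univ G⟩


lemma ncard_le_ncard_inter_closedNbhd_of_subset_insert (hSc : (G.induce S).Connected)
    (hv : v ∈ S) {y : V} (hy : y ∈ S) (hxy : G.Adj x y) (hA : A ⊆ insert x S \ {v}) :
    A.ncard ≤ (S ∩ closedNbhd G A).ncard := by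
  by_contra! hlt
  set W := S ∩ closedNbhd G A
  have hAW : A ∩ S ⊆ W := fun a ha => ⟨ha.2, subset_closedNbhd ha.1⟩
  have hxA : x ∈ A := by
    by_contra hxA
    refine hlt.not_ge (ncard_le_ncard fun a ha => hAW ⟨ha, ?_⟩)
    exact (hA ha).1.resolve_left (ne_of_mem_of_not_mem ha hxA)
  have hWA : W ⊆ A := by
    have hsub : A \ {x} ⊆ W := fun a ha => hAW ⟨ha.1, (hA ha.1).1.resolve_left ha.2⟩
    have hcard : W.ncard ≤ (A \ {x}).ncard := by
      rw [ncard_sdiff_singleton_of_mem hxA]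
      omega
    exact (eq_of_subset_of_ncard_le hsub hcard).ge.trans sdiff_subset
  have hvW : v ∈ W := by
    refine mem_of_forall_adj_mem hSc (a := y) ⟨hy, hy, mem_closedNbhd_of_adj hxA hxy⟩ hv ?_
    exact fun p hp q hq hpq => ⟨hq, mem_closedNbhd_of_adj (hWA hp.2) hpq⟩
  exact (hA (hWA hvW)).2 rfl

lemma isEvcClass_insert (hG : G.Connected) (hS : IsVC G S)
    (hSc : (G.induce S).Connected) (hx : x ∉ S) :
    IsEvcClass G (S.ncard + 1) {T | ∃ x ∉ S, T = insert x S} := by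
  refine isEvcClass_of_forall_defends ⟨_, x, hx, rfl⟩ ?_ ?_
  · rintro _ ⟨y, hy, rfl⟩
    exact ⟨hS.mono (subset_insert y S), ncard_insert_of_notMem hy⟩
  · rintro _ ⟨x, hx, rfl⟩ u v huv hu
    have huS : u ∉ S := fun h => hu (mem_insert_of_mem x h)
    have hvS : v ∈ S := (hS huv).resolve_left huS
    obtain ⟨y, hy, hxy⟩ := exists_adj_mem_of_connected hG hS hvS hx
    refine ⟨insert u S, ⟨u, huS, rfl⟩, defends_of_hall ?_ (mem_insert_of_mem x hvS)
      (mem_insert u S) huv fun A hA => ?_⟩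
    · rw [ncard_insert_of_notMem huS, ncard_insert_of_notMem hx]
    · rw [insert_sdiff_self_of_notMem huS]
      exact ncard_le_ncard_inter_closedNbhd_of_subset_insert hSc hvS hy hxy hA

theorem evc_le_ncard_add_one (hG : G.Connected) (hS : IsVC G S)
    (hSc : (G.induce S).Connected) : evc G ≤ S.ncard + 1 := by
  by_cases h : S = univ
  · rw [h, ncard_univ]
    exact (evc_le_of_isEvcClass (isEvcClass_univ G)).trans (Nat.le_succ _)
  · obtain ⟨x, hx⟩ := (ne_univ_iff_exists_notMem S).1 h
    exact evc_le_of_isEvcClass (isEvcClass_insert hG hS hSc hx)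

lemma isMinVC_insert_sdiff_union (hS : IsMinVC G S) (hT : IsVC G T) (hAS : A ⊆ S)
    (hlt : ((T \ {u}) ∩ closedNbhd G A).ncard < A.ncard) :
    IsMinVC G (insert u (S \ A ∪ (T \ {u}) ∩ closedNbhd G A)) ∧
      S ∩ ((T \ {u}) ∩ closedNbhd G A) ⊆ A := by
  set W := (T \ {u}) ∩ closedNbhd G A
  have hvc : IsVC G (insert u (S \ A ∪ W)) := by
    refine (hS.1.sdiff_union_inter_closedNbhd hT A).mono ?_
    rintro x (hx | ⟨hxT, hxN⟩)
    · exact Or.inr (Or.inl hx)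
    · by_cases hxu : x = u
      · exact Or.inl hxu
      · exact Or.inr (Or.inr ⟨⟨hxT, hxu⟩, hxN⟩)
  have h1 := mvc_le_ncard hvc
  have h2 := ncard_insert_le u (S \ A ∪ W)
  have h3 := ncard_union_add_ncard_inter (S \ A) W
  have h4 := ncard_sdiff_add_ncard_of_subset hAS
  have h5 := hS.2
  have hdisj : (S \ A ∩ W).ncard = 0 := by omega
  refine ⟨⟨hvc, by omega⟩, fun x hx => ?_⟩
  by_contra hxA
  rw [ncard_eq_zero] at hdisj
  exact hdisj.subset ⟨⟨hx.1, hxA⟩, hx.2⟩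

lemma ncard_le_ncard_inter_closedNbhd_of_maximal (hS : IsMinVC G S)
    (hSc : (G.induce S).Connected) (hT : IsVC G T) (huS : u ∉ S) (hv : v ∈ S)
    (hmax : ∀ T', IsMinVC G T' → u ∈ T' → (S ∩ T').ncard ≤ (S ∩ T).ncard)
    (hA : A ⊆ S \ {v}) : A.ncard ≤ ((T \ {u}) ∩ closedNbhd G A).ncard := by
  by_contra! hlt
  set W := (T \ {u}) ∩ closedNbhd G A
  have hAS : A ⊆ S := fun a ha => (hA ha).1
  have hne : ∀ ⦃x⦄, x ∈ S → x ≠ u := fun x hx hxu => huS (hxu ▸ hx)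
  obtain ⟨hT', hSWA⟩ := isMinVC_insert_sdiff_union hS hT hAS hlt
  have hcount : (S \ T).ncard ≤ (A \ W).ncard := by
    have hsub : S \ A ∪ A ∩ W ⊆ S ∩ insert u (S \ A ∪ W) := by
      rintro x (hx | hx)
      · exact ⟨hx.1, Or.inr (Or.inl hx)⟩
      · exact ⟨hAS hx.1, Or.inr (Or.inr hx.2)⟩
    have h1 := (ncard_le_ncard hsub).trans (hmax _ hT' (mem_insert u _))
    rw [ncard_union_eq (disjoint_sdiff_left.mono_right inter_subset_left)] at h1
    have h2 := ncard_inter_add_ncard_sdiff_eq_ncard S T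
    have h3 := ncard_inter_add_ncard_sdiff_eq_ncard A W
    have h4 := ncard_sdiff_add_ncard_of_subset hAS
    omega
  have hST : A \ W = S \ T := by
    refine eq_of_subset_of_ncard_le (fun a ha => ⟨hAS ha.1, fun haT => ha.2 ?_⟩) hcount
    exact ⟨⟨haT, hne (hAS ha.1)⟩, subset_closedNbhd ha.1⟩
  have hclosed : ∀ p ∈ S ∩ A, ∀ q ∈ S, G.Adj p q → q ∈ A := by
    intro p hp q hq hpq
    by_cases hqT : q ∈ T
    · exact hSWA ⟨hq, ⟨hqT, hne hq⟩, mem_closedNbhd_of_adj hp.2 hpq⟩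
    · exact (hST.ge ⟨hq, hqT⟩).1
  obtain ⟨a, ha⟩ := nonempty_of_ncard_ne_zero (by omega : A.ncard ≠ 0)
  exact (hA (mem_of_forall_adj_mem hSc ⟨hAS ha, ha⟩ hv hclosed)).2 rfl

lemma exists_defends_of_isMinVC (hS : IsMinVC G S) (hSc : (G.induce S).Connected)
    (huv : G.Adj u v) (hu : u ∉ S) (hcov : ∃ T, IsMinVC G T ∧ u ∈ T) :
    ∃ T, IsMinVC G T ∧ Defends G S T u v := by
  obtain ⟨T, ⟨hT, huT⟩, hmax⟩ :=
    exists_max_image {T | IsMinVC G T ∧ u ∈ T} (fun T => (S ∩ T).ncard) (toFinite _) hcov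
  have hv : v ∈ S := (hS.1 huv).resolve_left hu
  refine ⟨T, hT, defends_of_hall (hT.2.trans hS.2.symm).le hv huT huv fun A hA => ?_⟩
  exact ncard_le_ncard_inter_closedNbhd_of_maximal hS hSc hT.1 hu hv
    (fun T' hT' huT' => hmax T' ⟨hT', huT'⟩) hA

lemma isEvcClass_setOf_isMinVC (hcc : ∀ S, IsMinVC G S → (G.induce S).Connected)
    (hcov : ∀ v, ∃ S, IsMinVC G S ∧ v ∈ S) : IsEvcClass G (mvc G) {S | IsMinVC G S} :=
  isEvcClass_of_forall_defends (exists_isMinVC G) (fun _ hS => hS) fun S hS u _ huv hu =>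
    exists_defends_of_isMinVC hS (hcc S hS) huv hu (hcov u)

end EVC

/-- If `G` is connected and every minimum vertex cover of `G` induces a
connected subgraph, then `evc G = mvc G` when every vertex lies in some minimum vertex
cover, and `evc G = mvc G + 1` otherwise. -/
theorem evc_eq_mvc_or_succ_of_connected_min_covers {V : Type*} [Finite V]
    (G : SimpleGraph V) (hconn : G.Connected)
    (hcc : ∀ S : Set V, IsVC G S → S.ncard = mvc G → (G.induce S).Connected) :
    ((∀ v : V, ∃ S : Set V, IsVC G S ∧ S.ncard = mvc G ∧ v ∈ S) → evc G = mvc G) ∧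
    (¬ (∀ v : V, ∃ S : Set V, IsVC G S ∧ S.ncard = mvc G ∧ v ∈ S) →
      evc G = mvc G + 1) := by
  have hcc' : ∀ S, IsMinVC G S → (G.induce S).Connected := fun S hS => hcc S hS.1 hS.2
  obtain ⟨C, hC⟩ := exists_isEvcClass_evc G
  refine ⟨fun hcov => ?_, fun hcov => ?_⟩
  · refine le_antisymm (evc_le_of_isEvcClass (isEvcClass_setOf_isMinVC hcc' fun v => ?_))
      (mvc_le_of_isEvcClass hC)
    obtain ⟨S, hS, hSc, hv⟩ := hcov v
    exact ⟨S, ⟨hS, hSc⟩, hv⟩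
  · push Not at hcov
    obtain ⟨w, hw⟩ := hcov
    have hw' : ∀ S, IsMinVC G S → w ∉ S := fun S hS => hw S hS.1 hS.2
    obtain ⟨S, hS⟩ := exists_isMinVC G
    obtain ⟨v, hv⟩ := (hcc' S hS).nonempty
    obtain ⟨y, -, hwy⟩ := exists_adj_mem_of_connected hconn hS.1 hv (hw' S hS)
    exact le_antisymm (hS.2 ▸ evc_le_ncard_add_one hconn hS.1 (hcc' S hS))
      (mvc_lt_of_isEvcClass hw' hwy hC)
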